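/- arXiv:2306.16314 — 4 statements merged into one kernel-verified Lean document; each statement's English description precedes it below -/
import Mathlib

section
/- Let P be symmetric positive definite, D₁ = P⁻¹Q with Q + Qᵀ = B, and D₂ = P⁻¹(B D₁ - D₁ᵀ P D₁). Then the semi-discrete heat equation d/dt u = β D₂ u with β ≥ 0 satisfies d/dt (uᵀ P u) = 2β uᵀ B D₁ u - 2β (D₁u)ᵀ P (D₁u). -/
/-!
Since `P` is symmetric, `d/dt (uᵀ P u) = 2 uᵀ P u'`, and `P u' = β P D₂ u = β (B D₁ - D₁ᵀ P D₁) u`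
because `P P⁻¹ = 1`. Moving `D₁ᵀ` across the dot product turns `uᵀ D₁ᵀ P D₁ u` into
`(D₁ u)ᵀ P (D₁ u)`.
-/

open Matrix

section Calculus

variable {𝕜 : Type*} [NontriviallyNormedField 𝕜] {m n : Type*} [Fintype n]
  {f g : 𝕜 → n → 𝕜} {f' g' : n → 𝕜} {t : 𝕜}

theorem HasDerivAt.dotProduct (hf : HasDerivAt f f' t) (hg : HasDerivAt g g' t) :
    HasDerivAt (fun s => f s ⬝ᵥ g s) (f' ⬝ᵥ g t + f t ⬝ᵥ g') t := by
  simp only [_root_.dotProduct, ← Finset.sum_add_distrib]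
  exact HasDerivAt.fun_sum fun i _ => (hasDerivAt_pi.mp hf i).mul (hasDerivAt_pi.mp hg i)

theorem HasDerivAt.const_mulVec (A : Matrix m n 𝕜) (hf : HasDerivAt f f' t) :
    HasDerivAt (fun s => A *ᵥ f s) (A *ᵥ f') t :=
  hasDerivAt_pi.mpr fun i => by
    simpa [mulVec] using (hasDerivAt_const t (A i)).dotProduct hf

theorem HasDerivAt.dotProduct_mulVec_self {P : Matrix n n 𝕜} (hP : Pᵀ = P)
    (hf : HasDerivAt f f' t) :
    HasDerivAt (fun s => f s ⬝ᵥ (P *ᵥ f s)) (2 * (f t ⬝ᵥ (P *ᵥ f'))) t := by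
  convert hf.dotProduct (hf.const_mulVec P) using 1
  rw [← dotProduct_transpose_mulVec, hP, two_mul]

end Calculus

theorem dotProduct_transpose_mul_mul_mulVec {α m n : Type*} [CommSemiring α] [Fintype m]
    [Fintype n] (D : Matrix m n α) (P : Matrix m m α) (x : n → α) :
    x ⬝ᵥ ((Dᵀ * P * D) *ᵥ x) = (D *ᵥ x) ⬝ᵥ (P *ᵥ (D *ᵥ x)) := by
  rw [← mulVec_mulVec, ← mulVec_mulVec, dotProduct_transpose_mulVec, dotProduct_comm]

theorem stmt2_general (N : ℕ) (P : Matrix (Fin N) (Fin N) ℝ)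
    (hP : P.PosDef)
    (B : Matrix (Fin N) (Fin N) ℝ)
    (D₁ D₂ : Matrix (Fin N) (Fin N) ℝ)
    (hD₂ : D₂ = P⁻¹ * (B * D₁ - D₁ᵀ * P * D₁))
    (β : ℝ)
    (u : ℝ → Fin N → ℝ)
    (hu : ∀ t, HasDerivAt u (β • (D₂ *ᵥ u t)) t) :
    ∀ t, HasDerivAt (fun s => u s ⬝ᵥ (P *ᵥ u s))
      (2 * β * (u t ⬝ᵥ (B *ᵥ (D₁ *ᵥ u t)))
        - 2 * β * ((D₁ *ᵥ u t) ⬝ᵥ (P *ᵥ (D₁ *ᵥ u t)))) t := by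
  have hPD₂ : P * D₂ = B * D₁ - D₁ᵀ * P * D₁ := by
    rw [hD₂, mul_nonsing_inv_cancel_left _ _ ((isUnit_iff_isUnit_det P).mp hP.isUnit)]
  have hPsymm : Pᵀ = P := by simpa using hP.isHermitian.eq
  intro t
  refine ((hu t).dotProduct_mulVec_self hPsymm).congr_deriv ?_
  rw [mulVec_smul, mulVec_mulVec, hPD₂, sub_mulVec, dotProduct_smul, dotProduct_sub,
    dotProduct_transpose_mul_mul_mulVec, ← mulVec_mulVec, smul_eq_mul]
  ring

theorem stmt2 (N : ℕ) (hN : 2 ≤ N) (P Q : Matrix (Fin N) (Fin N) ℝ)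
    (hP : P.PosDef)
    (B : Matrix (Fin N) (Fin N) ℝ)
    (hBdef : B = Matrix.diagonal (fun i : Fin N =>
      if (i : ℕ) = 0 then (-1 : ℝ) else if (i : ℕ) = N - 1 then 1 else 0))
    (hB : Q + Qᵀ = B)
    (D₁ D₂ : Matrix (Fin N) (Fin N) ℝ)
    (hD₁ : D₁ = P⁻¹ * Q)
    (hD₂ : D₂ = P⁻¹ * (B * D₁ - D₁ᵀ * P * D₁))
    (β : ℝ) (hβ : 0 ≤ β)
    (u : ℝ → Fin N → ℝ)
    (hu : ∀ t, HasDerivAt u (β • (D₂ *ᵥ u t)) t) :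
    ∀ t, HasDerivAt (fun s => u s ⬝ᵥ (P *ᵥ u s))
      (2 * β * (u t ⬝ᵥ (B *ᵥ (D₁ *ᵥ u t)))
        - 2 * β * ((D₁ *ᵥ u t) ⬝ᵥ (P *ᵥ (D₁ *ᵥ u t)))) t :=
  stmt2_general N P hP B D₁ D₂ hD₂ β u hu
end

section
/- Let F ⊂ C²([x_L,x_R]) and let D₁ = P⁻¹Q satisfy the first-derivative SBP conditions with Q+Qᵀ = B. If D₁ is exact for the direct sum F ⊕ F' (i.e., D₁ applied to nodal values of g gives nodal values of g' for all g in F ⊕ F'), then D₂ = P⁻¹(B D₁ - D₁ᵀ P D₁) is F-exact: D₂ 𝐟 = 𝐟'' for all f ∈ F. -/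
open Matrix

theorem stmt4 (N : ℕ) (hN : 2 ≤ N) (xL xR : ℝ) (hx : xL < xR)
    (x : Fin N → ℝ) (hmono : StrictMono x)
    (hxL : ∀ i, x i ∈ Set.Icc xL xR)
    (F : Set (ℝ → ℝ)) (hF : ∀ f ∈ F, ContDiff ℝ 2 f)
    (P Q : Matrix (Fin N) (Fin N) ℝ) (hP : P.PosDef)
    (B : Matrix (Fin N) (Fin N) ℝ)
    (hBdef : B = Matrix.diagonal (fun i : Fin N =>
      if (i : ℕ) = 0 then (-1 : ℝ) else if (i : ℕ) = N - 1 then 1 else 0))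
    (hB : Q + Qᵀ = B)
    (D₁ D₂ : Matrix (Fin N) (Fin N) ℝ)
    (hD₁ : D₁ = P⁻¹ * Q)
    (hD₂ : D₂ = P⁻¹ * (B * D₁ - D₁ᵀ * P * D₁))
    -- D₁ is exact on F ⊕ F'
    (hexact : ∀ g : ℝ → ℝ, (g ∈ F ∨ ∃ f ∈ F, g = deriv f) →
      D₁ *ᵥ (fun i => g (x i)) = fun i => deriv g (x i)) :
    ∀ f ∈ F, D₂ *ᵥ (fun i => f (x i)) = fun i => deriv (deriv f) (x i) := by
  intro f hf
  have hPinv : Invertible P := hP.isUnit.invertible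
  have hPsymm : Pᵀ = P := hP.isHermitian.eq
  have hDT : D₁ᵀ * P = Qᵀ := by
    rw [hD₁, Matrix.transpose_mul, Matrix.transpose_nonsing_inv, hPsymm,
      Matrix.mul_assoc, Matrix.nonsing_inv_mul P (isUnit_iff_ne_zero.2 hP.det_pos.ne')]
    simp
  have hD2 : D₂ = D₁ * D₁ := by
    rw [hD₂, hDT]
    have : B * D₁ - Qᵀ * D₁ = Q * D₁ := by
      rw [← hB]; rw [Matrix.add_mul]; abel
    rw [this, ← Matrix.mul_assoc, ← hD₁]
  have h1 := hexact f (Or.inl hf)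
  have h2 := hexact (deriv f) (Or.inr ⟨f, hf, rfl⟩)
  rw [hD2, ← Matrix.mulVec_mulVec, h1, h2]
end

section
/- Conversely, if D₂ = P⁻¹(B D₁ - D₁ᵀ P D₁) is F-exact and D₁ is F-exact (with P symmetric positive definite, Q + Qᵀ = B, D₁ = P⁻¹Q), then D₁ 𝐟' = 𝐟'' for all f ∈ F, so D₁ is exact on F + F'. -/
open Matrix

theorem stmt5 (N : ℕ) (hN : 2 ≤ N)
    (x : Fin N → ℝ) (hmono : StrictMono x)
    (F : Set (ℝ → ℝ)) (hF : ∀ f ∈ F, ContDiff ℝ 2 f)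
    (P Q : Matrix (Fin N) (Fin N) ℝ) (hP : P.PosDef)
    (B : Matrix (Fin N) (Fin N) ℝ)
    (hBdef : B = Matrix.diagonal (fun i : Fin N =>
      if (i : ℕ) = 0 then (-1 : ℝ) else if (i : ℕ) = N - 1 then 1 else 0))
    (hB : Q + Qᵀ = B)
    (D₁ D₂ : Matrix (Fin N) (Fin N) ℝ)
    (hD₁ : D₁ = P⁻¹ * Q)
    (hD₂ : D₂ = P⁻¹ * (B * D₁ - D₁ᵀ * P * D₁))
    -- D₁ is F-exact
    (hD₁exact : ∀ f ∈ F, D₁ *ᵥ (fun i => f (x i)) = fun i => deriv f (x i))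
    -- D₂ is F-exact
    (hD₂exact : ∀ f ∈ F, D₂ *ᵥ (fun i => f (x i)) = fun i => deriv (deriv f) (x i)) :
    ∀ f ∈ F, D₁ *ᵥ (fun i => deriv f (x i)) = fun i => deriv (deriv f) (x i) := by
  -- P is symmetric
  have hPsymm : Pᵀ = P := hP.isHermitian.eq
  have hPinv : P⁻¹ * P = 1 := Matrix.nonsing_inv_mul P hP.det_pos.ne'.isUnit
  -- D₁ᵀ * P = Qᵀ
  have hQt : D₁ᵀ * P = Qᵀ := by
    rw [hD₁, Matrix.transpose_mul, Matrix.transpose_nonsing_inv, hPsymm,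
      Matrix.mul_assoc, hPinv, Matrix.mul_one]
  -- D₂ = D₁ * D₁
  have hD2 : D₂ = D₁ * D₁ := by
    rw [hD₂, hQt]
    have : B * D₁ - Qᵀ * D₁ = Q * D₁ := by
      rw [← hB]; noncomm_ring
    rw [this, ← Matrix.mul_assoc, ← hD₁]
  intro f hf
  calc D₁ *ᵥ (fun i => deriv f (x i))
      = D₁ *ᵥ (D₁ *ᵥ (fun i => f (x i))) := by rw [hD₁exact f hf]
    _ = (D₁ * D₁) *ᵥ (fun i => f (x i)) := by rw [Matrix.mulVec_mulVec]
    _ = D₂ *ᵥ (fun i => f (x i)) := by rw [hD2]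
    _ = fun i => deriv (deriv f) (x i) := hD₂exact f hf
end

section
/- For D₂ = P⁻¹(B D₁ - A) with P symmetric positive definite, if the symmetric part A + Aᵀ is positive semidefinite, then any solution of d/dt u = β D₂ u with β ≥ 0 satisfies d/dt (uᵀ P u) ≤ 2β uᵀ B D₁ u. -/
/-!
Since `P` is symmetric, `d/dt (uᵀ P u) = 2 uᵀ P u' = 2β uᵀ (B D₁ - A) u`, and
`uᵀ A u = ½ uᵀ (A + Aᵀ) u ≥ 0`, so dropping the `A`-term can only increase the right-hand side.
-/

open Matrix

section Calculus

variable {𝕜 : Type*} [NontriviallyNormedField 𝕜] {ι : Type*} [Fintype ι]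
  {u w : 𝕜 → ι → 𝕜} {u' w' : ι → 𝕜} {t : 𝕜}

theorem HasDerivAt.dotProduct_s12 (hu : HasDerivAt u u' t) (hw : HasDerivAt w w' t) :
    HasDerivAt (fun s => u s ⬝ᵥ w s) (u' ⬝ᵥ w t + u t ⬝ᵥ w') t := by
  have h := HasDerivAt.fun_sum (u := Finset.univ) fun i _ =>
    (hasDerivAt_pi.mp hu i).fun_mul (hasDerivAt_pi.mp hw i)
  rwa [Finset.sum_add_distrib] at h

theorem HasDerivAt.mulVec (M : Matrix ι ι 𝕜) (hu : HasDerivAt u u' t) :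
    HasDerivAt (fun s => M *ᵥ u s) (M *ᵥ u') t :=
  hasDerivAt_pi.mpr fun i =>
    HasDerivAt.fun_sum (u := Finset.univ) fun j _ => (hasDerivAt_pi.mp hu j).const_mul (M i j)

theorem HasDerivAt.dotProduct_mulVec_self_s12 {M : Matrix ι ι 𝕜} (hM : M.IsSymm)
    (hu : HasDerivAt u u' t) :
    HasDerivAt (fun s => u s ⬝ᵥ (M *ᵥ u s)) (2 * (u t ⬝ᵥ (M *ᵥ u'))) t := by
  convert hu.dotProduct_s12 (hu.mulVec M) using 1
  rw [← dotProduct_transpose_mulVec, hM.eq]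
  ring

end Calculus

section QuadraticForm

variable {ι : Type*} [Fintype ι]

theorem dotProduct_add_transpose_mulVec {R : Type*} [CommRing R] (A : Matrix ι ι R)
    (x : ι → R) : x ⬝ᵥ ((A + Aᵀ) *ᵥ x) = 2 * (x ⬝ᵥ (A *ᵥ x)) := by
  rw [add_mulVec, dotProduct_add, dotProduct_transpose_mulVec]
  ring

theorem dotProduct_mulVec_nonneg_of_posSemidef_add_transpose {A : Matrix ι ι ℝ}
    (hA : (A + Aᵀ).PosSemidef) (x : ι → ℝ) : 0 ≤ x ⬝ᵥ (A *ᵥ x) := by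
  have h := hA.dotProduct_mulVec_nonneg x
  rw [star_trivial, dotProduct_add_transpose_mulVec] at h
  linarith

end QuadraticForm

theorem stmt12_general (N : ℕ) (P A D₁ D₂ : Matrix (Fin N) (Fin N) ℝ)
    (hP : P.PosDef)
    (hA : (A + Aᵀ).PosSemidef)
    (B : Matrix (Fin N) (Fin N) ℝ)
    (hD₂ : D₂ = P⁻¹ * (B * D₁ - A))
    (β : ℝ) (hβ : 0 ≤ β)
    (u : ℝ → Fin N → ℝ)
    (hu : ∀ t, HasDerivAt u (β • (D₂ *ᵥ u t)) t) :
    ∀ t, deriv (fun s => u s ⬝ᵥ (P *ᵥ u s)) t ≤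
      2 * β * (u t ⬝ᵥ (B *ᵥ (D₁ *ᵥ u t))) := by
  intro t
  have hPD₂ : P * D₂ = B * D₁ - A := by
    rw [hD₂, mul_nonsing_inv_cancel_left _ _ ((isUnit_iff_isUnit_det P).mp hP.isUnit)]
  have hPsymm : P.IsSymm := isHermitian_iff_isSymm.mp hP.isHermitian
  rw [((hu t).dotProduct_mulVec_self_s12 hPsymm).deriv, mulVec_smul, mulVec_mulVec, hPD₂,
    sub_mulVec, ← mulVec_mulVec, dotProduct_smul, dotProduct_sub, smul_eq_mul]
  nlinarith [mul_nonneg hβ (dotProduct_mulVec_nonneg_of_posSemidef_add_transpose hA (u t))]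

theorem stmt12 (N : ℕ) (hN : 2 ≤ N) (P A D₁ D₂ : Matrix (Fin N) (Fin N) ℝ)
    (hP : P.PosDef)
    (hA : (A + Aᵀ).PosSemidef)
    (B : Matrix (Fin N) (Fin N) ℝ)
    (hBdef : B = Matrix.diagonal (fun i : Fin N =>
      if (i : ℕ) = 0 then (-1 : ℝ) else if (i : ℕ) = N - 1 then 1 else 0))
    (hD₂ : D₂ = P⁻¹ * (B * D₁ - A))
    (β : ℝ) (hβ : 0 ≤ β)
    (u : ℝ → Fin N → ℝ)
    (hu : ∀ t, HasDerivAt u (β • (D₂ *ᵥ u t)) t) :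
    ∀ t, deriv (fun s => u s ⬝ᵥ (P *ᵥ u s)) t ≤
      2 * β * (u t ⬝ᵥ (B *ᵥ (D₁ *ᵥ u t))) :=
  stmt12_general N P A D₁ D₂ hP hA B hD₂ β hβ u hu
end
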